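/- Let μ, λ₁, λ₂ > 0. Then there exists Ē > 0, depending only on μ, λ₁, λ₂, such that for every x₀ ∈ ℝ with μ²x₀²/2 ≤ Ē and for each i ∈ {1, 2}, every twice differentiable solution ξ : ℝ → ℝ of the linearized equation ξ''(t) + (λᵢ² + x₀²·cos²(μt))·ξ(t) = 0 is bounded on ℝ. -/

import Mathlib

/-!
For `λ = λᵢ` the linearized equation is Hill's equation `ξ'' + p ξ = 0` with a `π/μ`-periodic
coefficient `λ² ≤ p = λ² + x₀² cos² (μ t) ≤ β² := λ² + x₀²`. Small energy means
`β < μ (⌊λ/μ⌋ + 1)`, i.e. no integer lies in `(λ/μ, β/μ]`. By Sturm comparison with `sin (λ t)`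
and `sin (β t)`, consecutive zeros of a nontrivial solution are at distance in `[π/β, π/λ)`, so a
solution with `ψ (t + π/μ) = ρ ψ t`, `ρ` real, would have `m` zeros per period with
`λ/μ < m ≤ β/μ`. Hence the monodromy `ξ ↦ ξ (· + π/μ)`, of determinant `1` by invariance of the
Wronskian, has non-real eigenvalues: its trace `b` satisfies `b² < 4`, and then the recurrence
`ξ (t + 2T) = b ξ (t + T) - ξ t` preserves a positive definite quadratic form, so `ξ` is bounded.
When `x₀ = 0` the energy `ξ'² + λ² ξ²` is conserved instead.
-/

open Real Set Filter Topology

theorem sin_mul_sub_pos {c a t : ℝ} (hc : 0 < c) (ht : t ∈ Ioo a (a + π / c)) :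
    0 < sin (c * (t - a)) := by
  refine sin_pos_of_pos_of_lt_pi (mul_pos hc (sub_pos.2 ht.1)) ?_
  have := (lt_div_iff₀' hc).1 (sub_lt_iff_lt_add'.2 ht.2)
  linarith

theorem exists_mem_Ioo_sin_mul_ne_zero {c a b : ℝ} (hc : c ≠ 0) (hab : a < b) :
    ∃ t ∈ Ioo a b, sin (c * t) ≠ 0 := by
  have hzeros : {t | sin (c * t) = 0}.Countable := by
    refine (countable_range fun n : ℤ => n * π / c).mono fun t ht => ?_
    obtain ⟨n, hn⟩ := sin_eq_zero_iff.1 ht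
    exact ⟨n, show n * π / c = t by rw [hn, mul_div_cancel_left₀ t hc]⟩
  obtain ⟨t, ht, htab⟩ := (hzeros.dense_compl ℝ).exists_between hab
  exact ⟨t, htab, ht⟩

theorem deriv_nonneg_of_eq_zero_of_pos {f : ℝ → ℝ} {a b : ℝ} (hf : DifferentiableAt ℝ f a)
    (hab : a < b) (ha : f a = 0) (hpos : ∀ t ∈ Ioo a b, 0 < f t) : 0 ≤ deriv f a := by
  refine ge_of_tendsto (hasDerivAt_iff_tendsto_slope_left_right.1 hf.hasDerivAt).2 ?_
  filter_upwards [Ioo_mem_nhdsGT hab] with t ht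
  rw [slope_def_field, ha, sub_zero]
  exact (div_pos (hpos t ht) (sub_pos.2 ht.1)).le

theorem deriv_nonpos_of_eq_zero_of_pos {f : ℝ → ℝ} {a b : ℝ} (hf : DifferentiableAt ℝ f b)
    (hab : a < b) (hb : f b = 0) (hpos : ∀ t ∈ Ioo a b, 0 < f t) : deriv f b ≤ 0 := by
  refine le_of_tendsto (hasDerivAt_iff_tendsto_slope_left_right.1 hf.hasDerivAt).1 ?_
  filter_upwards [Ioo_mem_nhdsLT hab] with t ht
  rw [slope_def_field, hb, sub_zero]
  exact (div_neg_of_pos_of_neg (hpos t ht) (sub_neg.2 ht.2)).le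

theorem Continuous.nonneg_Icc_of_pos_Ioo {f : ℝ → ℝ} (hf : Continuous f) {a b : ℝ} (hab : a < b)
    (hpos : ∀ t ∈ Ioo a b, 0 < f t) : ∀ t ∈ Icc a b, 0 ≤ f t := by
  rw [← closure_Ioo hab.ne]
  exact closure_minimal (fun t ht => (hpos t ht).le) (isClosed_le continuous_const hf)

theorem exists_next_zero {f : ℝ → ℝ} (hf : Continuous f) {z : ℝ}
    (hiso : ∀ᶠ t in 𝓝[>] z, f t ≠ 0) (hex : ∃ t, z < t ∧ f t = 0) :
    ∃ w, z < w ∧ f w = 0 ∧ ∀ t ∈ Ioo z w, f t ≠ 0 := by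
  obtain ⟨δ, hzδ, hδ⟩ := mem_nhdsGT_iff_exists_Ioo_subset.1 hiso
  set S := {t | f t = 0} ∩ Ici δ
  have hS_bdd : BddBelow S := ⟨δ, fun _ ht => ht.2⟩
  obtain ⟨t₁, hzt₁, ht₁⟩ := hex
  have hS : S.Nonempty := ⟨t₁, ht₁, not_lt.1 fun h => hδ ⟨hzt₁, h⟩ ht₁⟩
  have hw := ((isClosed_eq hf continuous_const).inter isClosed_Ici).csInf_mem hS hS_bdd
  refine ⟨sInf S, hzδ.trans_le hw.2, hw.1, fun t ht hft => ?_⟩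
  rcases lt_or_ge t δ with h | h
  · exact hδ ⟨ht.1, h⟩ hft
  · exact (csInf_le hS_bdd ⟨hft, h⟩).not_gt ht.2

/-- `m` is the number of gaps between consecutive points of `Z` from `z` to `z'`. -/
theorem exists_nat_mul_le_sub_lt {Z : Set ℝ} {d₁ d₂ : ℝ} (hd₁ : 0 < d₁)
    (hnext : ∀ z ∈ Z, ∃ w ∈ Z, z < w ∧ (∀ t ∈ Ioo z w, t ∉ Z) ∧ d₁ ≤ w - z ∧ w - z < d₂)
    {z z' : ℝ} (hz : z ∈ Z) (hz' : z' ∈ Z) (hzz' : z < z') :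
    ∃ m : ℕ, m * d₁ ≤ z' - z ∧ z' - z < m * d₂ := by
  obtain ⟨N, hN⟩ := exists_nat_gt ((z' - z) / d₁)
  rw [div_lt_iff₀ hd₁] at hN
  induction N generalizing z with
  | zero => simp only [CharP.cast_eq_zero, zero_mul] at hN; linarith
  | succ N ih =>
    obtain ⟨w, hw, hzw, hgap, hd₁w, hd₂w⟩ := hnext z hz
    rcases lt_trichotomy w z' with h | rfl | h
    · obtain ⟨m, hm₁, hm₂⟩ := ih hw h (by push_cast at hN; linarith)
      exact ⟨m + 1, by push_cast; linarith, by push_cast; linarith⟩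
    · exact ⟨1, by simpa using hd₁w, by simpa using hd₂w⟩
    · exact absurd hz' (hgap z' ⟨hzz', h⟩)

/-- `f t ^ 2 - b f t f (t + T) + f (t + T) ^ 2` is `T`-periodic, and positive definite
when `b ^ 2 < 4`. -/
theorem exists_abs_le_of_recurrence {f : ℝ → ℝ} {T b : ℝ} (hf : Continuous f) (hT : T ≠ 0)
    (hb : b ^ 2 < 4) (hrec : ∀ t, f (t + T + T) = b * f (t + T) - f t) :
    ∃ C, ∀ t, |f t| ≤ C := by
  set Q : ℝ → ℝ := fun t => f t ^ 2 - b * f t * f (t + T) + f (t + T) ^ 2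
  have hQ : Function.Periodic Q T := fun t => by
    simp only [Q, hrec]
    ring
  obtain ⟨M, hM⟩ := (hQ.isBounded_of_continuous hT (by fun_prop)).bddAbove
  refine ⟨√(4 * M / (4 - b ^ 2)), fun t => abs_le_sqrt ?_⟩
  rw [le_div_iff₀ (by linarith)]
  nlinarith [hM (mem_range_self t), sq_nonneg (2 * f (t + T) - b * f t)]

noncomputable def wronskian (f g : ℝ → ℝ) (t : ℝ) : ℝ := f t * deriv g t - deriv f t * g t

/-- Cramer's rule for the pair `f, g`. -/
theorem mul_wronskian (f g h : ℝ → ℝ) (t : ℝ) :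
    h t * wronskian f g t = wronskian h g t * f t + wronskian f h t * g t := by
  simp only [wronskian]
  ring

theorem wronskian_swap (f g : ℝ → ℝ) (t : ℝ) : wronskian f g t = -wronskian g f t := by
  simp only [wronskian]
  ring

theorem wronskian_comp_add_const (f g : ℝ → ℝ) (T t : ℝ) :
    wronskian (fun t => f (t + T)) (fun t => g (t + T)) t = wronskian f g (t + T) := by
  simp only [wronskian, deriv_comp_add_const]

structure IsHillSolution (p ξ : ℝ → ℝ) : Prop where
  differentiable : Differentiable ℝ ξ
  differentiable_deriv : Differentiable ℝ (deriv ξ)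
  deriv_deriv : ∀ t, deriv (deriv ξ) t = -(p t * ξ t)

theorem isHillSolution_sin (c a : ℝ) :
    IsHillSolution (fun _ => c ^ 2) (fun t => sin (c * (t - a))) := by
  have hderiv : ∀ t, HasDerivAt (fun t => c * (t - a)) c t := fun t => by
    simpa using ((hasDerivAt_id t).sub_const a).const_mul c
  have hsin : deriv (fun t => sin (c * (t - a))) = fun t => c * cos (c * (t - a)) :=
    funext fun t => by rw [((hderiv t).sin).deriv]; ring
  refine ⟨fun t => ((hderiv t).sin).differentiableAt, ?_, fun t => ?_⟩
  · rw [hsin]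
    exact fun t => (((hderiv t).cos).const_mul c).differentiableAt
  · rw [hsin, (((hderiv t).cos).const_mul c).deriv]
    ring

namespace IsHillSolution

variable {p q₁ q₂ f g u v ξ ψ : ℝ → ℝ}

theorem const_mul (h : IsHillSolution p ξ) (c : ℝ) : IsHillSolution p (fun t => c * ξ t) where
  differentiable := h.differentiable.const_mul c
  differentiable_deriv := by
    rw [deriv_const_mul_field']
    exact h.differentiable_deriv.const_mul c
  deriv_deriv t := by
    simp only [deriv_const_mul_field', h.deriv_deriv]
    ring

theorem neg (h : IsHillSolution p ξ) : IsHillSolution p (fun t => -ξ t) := by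
  simpa using h.const_mul (-1)

theorem sub (hf : IsHillSolution p f) (hg : IsHillSolution p g) :
    IsHillSolution p (fun t => f t - g t) := by
  have hderiv : deriv (fun t => f t - g t) = fun t => deriv f t - deriv g t :=
    funext fun t => deriv_fun_sub (hf.differentiable t) (hg.differentiable t)
  refine ⟨hf.differentiable.sub hg.differentiable, ?_, fun t => ?_⟩
  · rw [hderiv]
    exact hf.differentiable_deriv.sub hg.differentiable_deriv
  · rw [hderiv, deriv_fun_sub (hf.differentiable_deriv t) (hg.differentiable_deriv t),
      hf.deriv_deriv, hg.deriv_deriv]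
    ring

theorem comp_add_const (h : IsHillSolution p ξ) {T : ℝ} (hp : Function.Periodic p T) :
    IsHillSolution p (fun t => ξ (t + T)) := by
  have hderiv : deriv (fun t => ξ (t + T)) = fun t => deriv ξ (t + T) :=
    funext (deriv_comp_add_const ξ T)
  refine ⟨h.differentiable.comp (differentiable_id.add_const T), ?_, fun t => ?_⟩
  · rw [hderiv]
    exact h.differentiable_deriv.comp (differentiable_id.add_const T)
  · rw [hderiv, deriv_comp_add_const (deriv ξ), h.deriv_deriv, hp t]

theorem hasDerivAt_prodMk (h : IsHillSolution p ξ) (t : ℝ) :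
    HasDerivAt (fun s => (ξ s, deriv ξ s)) (deriv ξ t, -(p t * ξ t)) t := by
  rw [← h.deriv_deriv]
  exact (h.differentiable t).hasDerivAt.prodMk (h.differentiable_deriv t).hasDerivAt

/-- Via uniqueness for the first-order system `(x, y)' = (y, -p x)`, whose right-hand side is
`max 1 P`-Lipschitz. -/
theorem eq_of_eq_of_deriv_eq {P : ℝ} (hP : ∀ t, |p t| ≤ P) (hf : IsHillSolution p f)
    (hg : IsHillSolution p g) {t₀ : ℝ} (h₀ : f t₀ = g t₀) (h₁ : deriv f t₀ = deriv g t₀) :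
    f = g := by
  have hlip : ∀ t, LipschitzOnWith (max 1 P.toNNReal)
      (fun z : ℝ × ℝ => (z.2, -(p t * z.1))) univ := by
    refine fun t => (LipschitzWith.prod_snd.prodMk (LipschitzWith.of_dist_le_mul ?_)).lipschitzOnWith
    intro z w
    rw [dist_neg_neg, Real.dist_eq, ← mul_sub, abs_mul, ← Real.dist_eq]
    exact mul_le_mul ((hP t).trans (le_coe_toNNReal P)) (le_max_left _ _) dist_nonneg
      P.toNNReal.coe_nonneg
  have := ODE_solution_unique_univ hlip (fun t => ⟨hf.hasDerivAt_prodMk t, mem_univ _⟩)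
    (fun t => ⟨hg.hasDerivAt_prodMk t, mem_univ _⟩) (Prod.ext h₀ h₁)
  exact funext fun t => congrArg Prod.fst (congrFun this t)

theorem eq_zero_of_eq_zero_of_deriv_eq_zero {P : ℝ} (hP : ∀ t, |p t| ≤ P)
    (h : IsHillSolution p ξ) {t₀ : ℝ} (h₀ : ξ t₀ = 0) (h₁ : deriv ξ t₀ = 0) : ξ = 0 := by
  have hzero : IsHillSolution p 0 := by simpa [Pi.zero_def] using h.const_mul 0
  exact h.eq_of_eq_of_deriv_eq hP hzero h₀ (by simpa using h₁)

theorem hasDerivAt_wronskian (hf : IsHillSolution q₁ f) (hg : IsHillSolution q₂ g) (t : ℝ) :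
    HasDerivAt (wronskian f g) ((q₁ t - q₂ t) * (f t * g t)) t := by
  have := ((hf.differentiable t).hasDerivAt.mul (hg.differentiable_deriv t).hasDerivAt).sub
    ((hf.differentiable_deriv t).hasDerivAt.mul (hg.differentiable t).hasDerivAt)
  rw [hf.deriv_deriv, hg.deriv_deriv] at this
  exact this.congr_deriv (by ring)

theorem wronskian_eq (hf : IsHillSolution p f) (hg : IsHillSolution p g) (t s : ℝ) :
    wronskian f g t = wronskian f g s :=
  is_const_of_deriv_eq_zero (fun t => (hf.hasDerivAt_wronskian hg t).differentiableAt)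
    (fun t => by simp [(hf.hasDerivAt_wronskian hg t).deriv]) t s

theorem exists_eq_const_mul_of_wronskian_eq_zero {P : ℝ} (hP : ∀ t, |p t| ≤ P)
    (hf : IsHillSolution p f) (hg : IsHillSolution p g) (hf₀ : f ≠ 0) {t₀ : ℝ}
    (hW : wronskian f g t₀ = 0) : ∃ ρ, g = fun t => ρ * f t := by
  have hdata : f t₀ ≠ 0 ∨ deriv f t₀ ≠ 0 := by
    by_contra! h
    exact hf₀ (hf.eq_zero_of_eq_zero_of_deriv_eq_zero hP h.1 h.2)
  obtain ⟨ρ, h₀, h₁⟩ : ∃ ρ, g t₀ = ρ * f t₀ ∧ deriv g t₀ = ρ * deriv f t₀ := by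
    simp only [wronskian] at hW
    rcases hdata with h | h
    · exact ⟨g t₀ / f t₀, by field_simp, by field_simp; linarith⟩
    · exact ⟨deriv g t₀ / deriv f t₀, by field_simp; linarith, by field_simp⟩
  exact ⟨ρ, hg.eq_of_eq_of_deriv_eq hP (hf.const_mul ρ) h₀ (by rw [h₁, deriv_const_mul_field'])⟩

/-- The Wronskian `W = u v' - u' v` decreases on `[a, b]` yet is `≤ 0` at `a` and `≥ 0` at `b`,
so it vanishes there, which is incompatible with `W' = (q₁ - q₂) u v < 0` at `t₀`. -/
theorem exists_nonpos_of_comparison (hu : IsHillSolution q₁ u) (hv : IsHillSolution q₂ v)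
    {a b t₀ : ℝ} (hab : a < b) (hua : u a = 0) (hub : u b = 0) (hu_pos : ∀ t ∈ Ioo a b, 0 < u t)
    (hq : ∀ t ∈ Ioo a b, q₁ t ≤ q₂ t) (ht₀ : t₀ ∈ Ioo a b) (hq₀ : q₁ t₀ < q₂ t₀) :
    ∃ t ∈ Ioo a b, v t ≤ 0 := by
  by_contra! hv_pos
  have hv_nonneg := hv.differentiable.continuous.nonneg_Icc_of_pos_Ioo hab hv_pos
  have hW := hu.hasDerivAt_wronskian hv
  have hanti : AntitoneOn (wronskian u v) (Icc a b) := by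
    refine antitoneOn_of_deriv_nonpos (convex_Icc a b)
      (fun t _ => (hW t).continuousAt.continuousWithinAt)
      (fun t _ => (hW t).differentiableAt.differentiableWithinAt) fun t ht => ?_
    rw [interior_Icc] at ht
    rw [(hW t).deriv]
    exact mul_nonpos_of_nonpos_of_nonneg (sub_nonpos.2 (hq t ht))
      (mul_pos (hu_pos t ht) (hv_pos t ht)).le
  have hWa : wronskian u v a ≤ 0 := by
    simp only [wronskian, hua, zero_mul, zero_sub, neg_nonpos]
    exact mul_nonneg (deriv_nonneg_of_eq_zero_of_pos (hu.differentiable a) hab hua hu_pos)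
      (hv_nonneg a (left_mem_Icc.2 hab.le))
  have hWb : 0 ≤ wronskian u v b := by
    simp only [wronskian, hub, zero_mul, zero_sub, neg_nonneg]
    exact mul_nonpos_of_nonpos_of_nonneg
      (deriv_nonpos_of_eq_zero_of_pos (hu.differentiable b) hab hub hu_pos)
      (hv_nonneg b (right_mem_Icc.2 hab.le))
  have hW₀ : wronskian u v =ᶠ[𝓝 t₀] fun _ => 0 := by
    filter_upwards [Ioo_mem_nhds ht₀.1 ht₀.2] with t ht
    have h₁ := hanti (left_mem_Icc.2 hab.le) (Ioo_subset_Icc_self ht) ht.1.le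
    have h₂ := hanti (Ioo_subset_Icc_self ht) (right_mem_Icc.2 hab.le) ht.2.le
    linarith
  have hderiv := (hW t₀).deriv
  rw [hW₀.deriv_eq, deriv_const] at hderiv
  have := mul_neg_of_neg_of_pos (sub_neg.2 hq₀) (mul_pos (hu_pos t₀ ht₀) (hv_pos t₀ ht₀))
  linarith

theorem exists_zero_of_comparison (hu : IsHillSolution q₁ u) (hv : IsHillSolution q₂ v)
    {a b t₀ : ℝ} (hab : a < b) (hua : u a = 0) (hub : u b = 0) (hu_ne : ∀ t ∈ Ioo a b, u t ≠ 0)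
    (hq : ∀ t ∈ Ioo a b, q₁ t ≤ q₂ t) (ht₀ : t₀ ∈ Ioo a b) (hq₀ : q₁ t₀ < q₂ t₀) :
    ∃ t ∈ Ioo a b, v t = 0 := by
  by_contra! hv_ne
  have hpos : ∀ u', IsHillSolution q₁ u' → u' a = 0 → u' b = 0 →
      (∀ t ∈ Ioo a b, 0 < u' t) → False := by
    intro u' hu' hu'a hu'b hu'_pos
    rcases isPreconnected_Ioo.mapsTo_Ioi_or_Iio hv.differentiable.continuous.continuousOn hv_ne
      with hv_pos | hv_neg
    · obtain ⟨t, ht, hvt⟩ := hu'.exists_nonpos_of_comparison hv hab hu'a hu'b hu'_pos hq ht₀ hq₀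
      exact (hv_pos ht).not_ge hvt
    · obtain ⟨t, ht, hvt⟩ :=
        hu'.exists_nonpos_of_comparison hv.neg hab hu'a hu'b hu'_pos hq ht₀ hq₀
      exact (hv_neg ht).not_ge (neg_nonpos.1 hvt)
  rcases isPreconnected_Ioo.mapsTo_Ioi_or_Iio hu.differentiable.continuous.continuousOn hu_ne
    with hu_pos | hu_neg
  · exact hpos u hu hua hub hu_pos
  · exact hpos _ hu.neg (by simp [hua]) (by simp [hub]) fun t ht => neg_pos.2 (hu_neg ht)

theorem exists_zero_mem_Ioo {lam : ℝ} (hlam : 0 < lam) (hp : ∀ t, lam ^ 2 ≤ p t)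
    (hstrict : ∀ a b, a < b → ∃ t ∈ Ioo a b, lam ^ 2 < p t) (hξ : IsHillSolution p ξ) (a : ℝ) :
    ∃ t ∈ Ioo a (a + π / lam), ξ t = 0 := by
  have hlen : a < a + π / lam := lt_add_of_pos_right a (div_pos pi_pos hlam)
  obtain ⟨t₀, ht₀, hq₀⟩ := hstrict _ _ hlen
  refine (isHillSolution_sin lam a).exists_zero_of_comparison hξ hlen (by simp) ?_
    (fun t ht => (sin_mul_sub_pos hlam ht).ne') (fun t _ => hp t) ht₀ hq₀
  rw [add_sub_cancel_left, mul_div_cancel₀ _ hlam.ne', sin_pi]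

theorem pi_div_le_sub_of_zeros {β : ℝ} (hβ : 0 < β) (hp : ∀ t, p t ≤ β ^ 2)
    (hstrict : ∀ a b, a < b → ∃ t ∈ Ioo a b, p t < β ^ 2) (hξ : IsHillSolution p ξ) {z w : ℝ}
    (hzw : z < w) (hz : ξ z = 0) (hw : ξ w = 0) (hne : ∀ t ∈ Ioo z w, ξ t ≠ 0) :
    π / β ≤ w - z := by
  by_contra! hlt
  obtain ⟨t₀, ht₀, hq₀⟩ := hstrict z w hzw
  obtain ⟨t, ht, hsin⟩ := hξ.exists_zero_of_comparison (isHillSolution_sin β z) hzw hz hw hne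
    (fun t _ => hp t) ht₀ hq₀
  exact (sin_mul_sub_pos hβ ⟨ht.1, by linarith [ht.2]⟩).ne' hsin

/-- Sturm comparison with `sin (λ t)` and `sin (β t)` puts consecutive zeros of a nontrivial
solution at distance in `[π / β, π / λ)`, so a solution multiplied by `ρ` over a period `T` has
`m` zeros per period with `λ < m π / T ≤ β`. -/
theorem eq_zero_of_forall_add_eq_mul {lam β T ρ : ℝ} (hlam : 0 < lam) (hβ : 0 < β) (hT : 0 < T)
    (hp_ge : ∀ t, lam ^ 2 ≤ p t) (hp_le : ∀ t, p t ≤ β ^ 2)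
    (hlow : ∀ a b, a < b → ∃ t ∈ Ioo a b, lam ^ 2 < p t)
    (hup : ∀ a b, a < b → ∃ t ∈ Ioo a b, p t < β ^ 2)
    (hgap : ∀ m : ℕ, lam < m * π / T → β < m * π / T)
    (hψ : IsHillSolution p ψ) (hflo : ∀ t, ψ (t + T) = ρ * ψ t) : ψ = 0 := by
  by_contra hψ₀
  have hP : ∀ t, |p t| ≤ β ^ 2 := fun t =>
    (abs_of_nonneg ((sq_nonneg lam).trans (hp_ge t))).trans_le (hp_le t)
  have hnext : ∀ z ∈ {t | ψ t = 0}, ∃ w ∈ {t | ψ t = 0}, z < w ∧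
      (∀ t ∈ Ioo z w, t ∉ {t | ψ t = 0}) ∧ π / β ≤ w - z ∧ w - z < π / lam := by
    intro z hz
    have hsimple : deriv ψ z ≠ 0 := fun h =>
      hψ₀ (hψ.eq_zero_of_eq_zero_of_deriv_eq_zero hP hz h)
    have hiso : ∀ᶠ t in 𝓝[>] z, ψ t ≠ 0 :=
      ((hψ.differentiable z).hasDerivAt.eventually_ne hsimple).filter_mono (nhdsGT_le_nhdsNE z)
    obtain ⟨t₁, ht₁, hψt₁⟩ := hψ.exists_zero_mem_Ioo hlam hp_ge hlow z
    obtain ⟨w, hzw, hw, hne⟩ := exists_next_zero hψ.differentiable.continuous hiso ⟨t₁, ht₁.1, hψt₁⟩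
    refine ⟨w, hw, hzw, hne, hψ.pi_div_le_sub_of_zeros hβ hp_le hup hzw hz hw hne, ?_⟩
    by_contra! hle
    exact hne t₁ ⟨ht₁.1, by linarith [ht₁.2]⟩ hψt₁
  obtain ⟨z, -, hz⟩ := hψ.exists_zero_mem_Ioo hlam hp_ge hlow 0
  have hzT : ψ (z + T) = 0 := by rw [hflo, hz, mul_zero]
  obtain ⟨m, hm₁, hm₂⟩ :=
    exists_nat_mul_le_sub_lt (div_pos pi_pos hβ) hnext hz hzT (lt_add_of_pos_right z hT)
  rw [add_sub_cancel_left, ← mul_div_assoc, div_le_iff₀ hβ, ← div_le_iff₀' hT] at hm₁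
  rw [add_sub_cancel_left, ← mul_div_assoc, lt_div_iff₀ hlam, ← lt_div_iff₀' hT] at hm₂
  exact (hgap m hm₂).not_ge hm₁

/-- The monodromy `ξ ↦ ξ (· + T)` preserves the Wronskian, so on the basis `ξ, ξ (· + T)` its
matrix has determinant `1`. -/
theorem exists_recurrence_of_wronskian_ne_zero {T : ℝ} (hp : Function.Periodic p T)
    (hξ : IsHillSolution p ξ) (hD : wronskian ξ (fun t => ξ (t + T)) 0 ≠ 0) :
    ∃ b, ∀ t, ξ (t + T + T) = b * ξ (t + T) - ξ t := by
  set η := fun t => ξ (t + T)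
  set ζ := fun t => ξ (t + T + T)
  have hη : IsHillSolution p η := hξ.comp_add_const hp
  have hζ : IsHillSolution p ζ := hη.comp_add_const hp
  refine ⟨wronskian ξ ζ 0 / wronskian ξ η 0, fun t => ?_⟩
  have hζη : wronskian ζ η t = -wronskian ξ η 0 := by
    rw [wronskian_swap, ← hξ.wronskian_eq hη (t + T) 0]
    exact congrArg Neg.neg (wronskian_comp_add_const ξ η T t)
  have h := mul_wronskian ξ η ζ t
  rw [hξ.wronskian_eq hη t 0, hξ.wronskian_eq hζ t 0, hζη] at h
  rw [div_mul_eq_mul_div, eq_sub_iff_add_eq, eq_div_iff hD]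
  linear_combination h

/-- If `ξ` and `ξ (· + T)` are dependent, `ξ` is a Floquet solution; otherwise, for `b ^ 2 ≥ 4`
the real roots `ρ, ρ'` of `x ^ 2 - b x + 1` give the Floquet solution `ξ (· + T) - ρ' ξ`. -/
theorem exists_abs_le_of_forall_add_eq_mul {T P : ℝ} (hT : T ≠ 0) (hp : Function.Periodic p T)
    (hP : ∀ t, |p t| ≤ P)
    (hfloquet : ∀ ψ ρ, IsHillSolution p ψ → (∀ t, ψ (t + T) = ρ * ψ t) → ψ = 0)
    (hξ : IsHillSolution p ξ) : ∃ C, ∀ t, |ξ t| ≤ C := by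
  set η := fun t => ξ (t + T)
  have hη : IsHillSolution p η := hξ.comp_add_const hp
  by_cases hD : wronskian ξ η 0 = 0
  · obtain rfl | hξ₀ := eq_or_ne ξ 0
    · exact ⟨0, by simp⟩
    obtain ⟨ρ, hρ⟩ := hξ.exists_eq_const_mul_of_wronskian_eq_zero hP hη hξ₀ hD
    exact absurd (hfloquet ξ ρ hξ fun t => congrFun hρ t) hξ₀
  obtain ⟨b, hrec⟩ := hξ.exists_recurrence_of_wronskian_ne_zero hp hD
  by_cases hb : b ^ 2 < 4
  · exact exists_abs_le_of_recurrence hξ.differentiable.continuous hT hb hrec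
  obtain ⟨ρ, ρ', hsum, hprod⟩ : ∃ ρ ρ' : ℝ, ρ + ρ' = b ∧ ρ * ρ' = 1 := by
    have hs := sq_sqrt (show 0 ≤ b ^ 2 - 4 by linarith)
    exact ⟨(b + √(b ^ 2 - 4)) / 2, (b - √(b ^ 2 - 4)) / 2, by ring,
      by linear_combination -hs / 4⟩
  have hχ := hfloquet (fun t => η t - ρ' * ξ t) ρ (hη.sub (hξ.const_mul ρ')) fun t => by
    simp only [η, hrec]
    linear_combination -ξ (t + T) * hsum + ξ t * hprod
  refine absurd ?_ hD
  have hηξ : η = fun t => ρ' * ξ t := funext fun t => sub_eq_zero.1 (congrFun hχ t)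
  rw [hηξ, wronskian, deriv_const_mul_field']
  ring

theorem exists_abs_le_of_const {c : ℝ} (hc : 0 < c) (hξ : IsHillSolution (fun _ => c) ξ) :
    ∃ C, ∀ t, |ξ t| ≤ C := by
  set E : ℝ → ℝ := fun t => deriv ξ t ^ 2 + c * ξ t ^ 2
  have hE : ∀ t, HasDerivAt E 0 t := fun t => by
    have := ((hξ.differentiable_deriv t).hasDerivAt.pow 2).add
      (((hξ.differentiable t).hasDerivAt.pow 2).const_mul c)
    rw [hξ.deriv_deriv] at this
    exact this.congr_deriv (by ring)
  refine ⟨√(E 0 / c), fun t => abs_le_sqrt ?_⟩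
  rw [le_div_iff₀ hc, ← is_const_of_deriv_eq_zero (fun t => (hE t).differentiableAt)
    (fun t => (hE t).deriv) t 0]
  nlinarith [sq_nonneg (deriv ξ t)]

end IsHillSolution

noncomputable def mathieuCoeff (μ lam x₀ t : ℝ) : ℝ := lam ^ 2 + x₀ ^ 2 * cos (μ * t) ^ 2

theorem mathieuCoeff_periodic {μ : ℝ} (hμ : μ ≠ 0) (lam x₀ : ℝ) :
    Function.Periodic (mathieuCoeff μ lam x₀) (π / μ) := fun t => by
  rw [mathieuCoeff, mathieuCoeff, mul_add, mul_div_cancel₀ π hμ, cos_add_pi, neg_sq]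

theorem sq_lt_sq_mul_floor_div_add_one_sq {μ lam : ℝ} (hμ : 0 < μ) (hlam : 0 < lam) :
    lam ^ 2 < μ ^ 2 * (⌊lam / μ⌋₊ + 1) ^ 2 := by
  rw [← mul_pow]
  refine pow_lt_pow_left₀ ?_ hlam.le two_ne_zero
  rw [mul_comm, ← div_lt_iff₀ hμ]
  exact Nat.lt_floor_add_one _

theorem lt_mul_nat_of_sq_lt_sq_mul_floor {μ lam β : ℝ} (hμ : 0 < μ) (hlam : 0 < lam)
    (hβ : β ^ 2 < μ ^ 2 * (⌊lam / μ⌋₊ + 1) ^ 2) {m : ℕ} (hm : lam < m * μ) : β < m * μ := by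
  have hm' : (⌊lam / μ⌋₊ : ℝ) + 1 ≤ m := by
    exact_mod_cast (Nat.floor_lt (div_pos hlam hμ).le).2 ((div_lt_iff₀ hμ).2 hm)
  refine lt_of_pow_lt_pow_left₀ 2 (by positivity) ?_
  calc β ^ 2 < μ ^ 2 * (⌊lam / μ⌋₊ + 1) ^ 2 := hβ
    _ ≤ (m * μ) ^ 2 := by rw [mul_pow, mul_comm]; gcongr

/-- For `x₀ ≠ 0`, the bounds `λ² ≤ p ≤ λ² + x₀²` are strict wherever `sin (2 μ t) ≠ 0`. -/
theorem exists_abs_le_of_mathieu {μ lam x₀ : ℝ} (hμ : 0 < μ) (hlam : 0 < lam)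
    (hsmall : lam ^ 2 + x₀ ^ 2 < μ ^ 2 * (⌊lam / μ⌋₊ + 1) ^ 2) {ξ : ℝ → ℝ}
    (hξ : IsHillSolution (mathieuCoeff μ lam x₀) ξ) : ∃ C, ∀ t, |ξ t| ≤ C := by
  obtain rfl | hx₀ := eq_or_ne x₀ 0
  · refine IsHillSolution.exists_abs_le_of_const (pow_pos hlam 2) ?_
    convert hξ using 1
    funext t
    simp [mathieuCoeff]
  set β := √(lam ^ 2 + x₀ ^ 2)
  have hβsq : β ^ 2 = lam ^ 2 + x₀ ^ 2 := sq_sqrt (by positivity)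
  have hge : ∀ t, lam ^ 2 ≤ mathieuCoeff μ lam x₀ t := fun t =>
    le_add_of_nonneg_right (by positivity)
  have hle : ∀ t, mathieuCoeff μ lam x₀ t ≤ β ^ 2 := fun t => by
    rw [hβsq, mathieuCoeff]
    nlinarith [cos_sq_le_one (μ * t), sq_nonneg x₀]
  have hstrict : ∀ a b, a < b → ∃ t ∈ Ioo a b, cos (μ * t) ≠ 0 ∧ sin (μ * t) ≠ 0 := by
    intro a b hab
    obtain ⟨t, ht, hsin⟩ := exists_mem_Ioo_sin_mul_ne_zero (mul_ne_zero two_ne_zero hμ.ne') hab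
    rw [mul_assoc, sin_two_mul] at hsin
    exact ⟨t, ht, right_ne_zero_of_mul hsin, right_ne_zero_of_mul (left_ne_zero_of_mul hsin)⟩
  refine hξ.exists_abs_le_of_forall_add_eq_mul (div_pos pi_pos hμ).ne'
    (mathieuCoeff_periodic hμ.ne' lam x₀)
    (fun t => (abs_of_nonneg ((sq_nonneg lam).trans (hge t))).trans_le (hle t))
    fun ψ ρ hψ hflo => hψ.eq_zero_of_forall_add_eq_mul hlam (sqrt_pos.2 (by positivity))
      (div_pos pi_pos hμ) hge hle (fun a b hab => ?_) (fun a b hab => ?_) (fun m hm => ?_) hflo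
  · obtain ⟨t, ht, hcos, -⟩ := hstrict a b hab
    exact ⟨t, ht, lt_add_of_pos_right _ (by positivity)⟩
  · obtain ⟨t, ht, -, hsin⟩ := hstrict a b hab
    refine ⟨t, ht, ?_⟩
    have : 0 < x₀ ^ 2 * sin (μ * t) ^ 2 := by positivity
    rw [hβsq, mathieuCoeff, cos_sq']
    linarith
  · have hres : (m : ℝ) * π / (π / μ) = m * μ := by field_simp
    rw [hres] at hm ⊢
    exact lt_mul_nat_of_sq_lt_sq_mul_floor hμ hlam (by rwa [hβsq]) hm

/-- **Stability for small energies (Corollary 2 of the paper).**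
There exists `Ē > 0`, depending only on `μ, λ₁, λ₂`, such that whenever the
energy `μ²x₀²/2 ≤ Ē`, every twice differentiable solution of the linearized
Mathieu equations `ξ'' + (λᵢ² + x₀² cos²(μt))ξ = 0` (`i = 1, 2`) is bounded. -/
theorem stability_small_energy
    (μ lam1 lam2 : ℝ) (hμ : 0 < μ) (hlam1 : 0 < lam1) (hlam2 : 0 < lam2) :
    ∃ Ebar : ℝ, 0 < Ebar ∧
      ∀ x₀ : ℝ, μ ^ 2 * x₀ ^ 2 / 2 ≤ Ebar →
        ∀ lam : ℝ, (lam = lam1 ∨ lam = lam2) →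
          ∀ ξ : ℝ → ℝ, Differentiable ℝ ξ → Differentiable ℝ (deriv ξ) →
            (∀ t : ℝ, deriv (deriv ξ) t
              + (lam ^ 2 + x₀ ^ 2 * (Real.cos (μ * t)) ^ 2) * ξ t = 0) →
            ∃ C : ℝ, ∀ t : ℝ, |ξ t| ≤ C := by
  set gap : ℝ → ℝ := fun lam => μ ^ 2 * (⌊lam / μ⌋₊ + 1) ^ 2 - lam ^ 2
  have hgap : ∀ lam, 0 < lam → 0 < gap lam := fun lam hlam =>
    sub_pos.2 (sq_lt_sq_mul_floor_div_add_one_sq hμ hlam)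
  refine ⟨μ ^ 2 / 4 * min (gap lam1) (gap lam2),
    mul_pos (by positivity) (lt_min (hgap lam1 hlam1) (hgap lam2 hlam2)),
    fun x₀ hE lam hlam ξ hξ hξ' heq => ?_⟩
  have hx₀ : x₀ ^ 2 ≤ min (gap lam1) (gap lam2) / 2 := by
    nlinarith [pow_pos hμ 2]
  obtain ⟨hlam₀, hsmall⟩ : 0 < lam ∧ x₀ ^ 2 < gap lam := by
    rcases hlam with rfl | rfl
    · exact ⟨hlam1, by linarith [min_le_left (gap lam) (gap lam2), hgap lam hlam1]⟩
    · exact ⟨hlam2, by linarith [min_le_right (gap lam1) (gap lam), hgap lam hlam2]⟩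
  exact exists_abs_le_of_mathieu hμ hlam₀ (by linarith [hsmall])
    ⟨hξ, hξ', fun t => eq_neg_of_add_eq_zero_left (heq t)⟩
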